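/- arXiv:1806.06844 — 3 statements merged into one kernel-verified Lean document; each statement's English description precedes it below -/
import Mathlib

section
/- Let K be a field, V a 3-dimensional K-vector space, R a 3-dimensional subspace of V ⊗ V, A = T(V)/(R) the quadratic algebra, and suppose dim A₂ = 6 and dim A₃ = 10. Let Q span the one-dimensional space R·V ∩ V·R (the quasipotential). Then for a nonzero u ∈ V, Q is a scalar multiple of u ⊗ u ⊗ u if and only if u ⊗ u ∈ R. -/
open Module

section Aux

variable {K : Type*} [Field K] {V : Type*} [AddCommGroup V] [Module K V]

/-- The matrix realizing left contraction by `f`. -/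
noncomputable def contrGen (f : Module.Dual K V) :
    V →ₗ[K] Matrix (Fin 2) (Fin 2) (TensorAlgebra K V) where
  toFun v := !![0, algebraMap K _ (f v); 0, TensorAlgebra.ι K v]
  map_add' v w := by
    ext i j
    fin_cases i <;> fin_cases j <;> simp [Matrix.add_apply]
  map_smul' c v := by
    ext i j
    fin_cases i <;> fin_cases j <;> simp [Matrix.smul_apply, Algebra.algebraMap_eq_smul_one,
      smul_smul]

noncomputable def contrHom (f : Module.Dual K V) :
    TensorAlgebra K V →ₐ[K] Matrix (Fin 2) (Fin 2) (TensorAlgebra K V) :=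
  TensorAlgebra.lift K (contrGen f)

lemma contrHom_diag (f : Module.Dual K V) (x : TensorAlgebra K V) :
    contrHom f x 1 0 = 0 ∧ contrHom f x 1 1 = x := by
  induction x using TensorAlgebra.induction with
  | algebraMap r =>
      rw [AlgHom.commutes]
      constructor
      · simp [Matrix.algebraMap_matrix_apply]
      · simp [Matrix.algebraMap_matrix_apply]
  | ι v =>
      have : contrHom f (TensorAlgebra.ι K v) = contrGen f v :=
        TensorAlgebra.lift_ι_apply _ _
      rw [this]
      constructor <;> simp [contrGen]
  | mul a b ha hb =>
      rw [map_mul]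
      constructor
      · rw [Matrix.mul_apply, Fin.sum_univ_two, ha.1, ha.2, hb.1]
        simp
      · rw [Matrix.mul_apply, Fin.sum_univ_two, ha.1, ha.2, hb.2]
        simp
  | add a b ha hb =>
      rw [map_add]
      exact ⟨by simp [Matrix.add_apply, ha.1, hb.1], by simp [Matrix.add_apply, ha.2, hb.2]⟩

lemma contrHom_ι_mul (f : Module.Dual K V) (v : V) (x : TensorAlgebra K V) :
    contrHom f (TensorAlgebra.ι K v * x) 0 1 = f v • x := by
  rw [map_mul]
  have h := TensorAlgebra.lift_ι_apply (contrGen f) v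
  rw [show contrHom f (TensorAlgebra.ι K v) = contrGen f v from h]
  rw [Matrix.mul_apply, Fin.sum_univ_two, (contrHom_diag f x).2]
  simp [contrGen, Algebra.smul_def]

end Aux

/-- For a quadratic algebra `A = T(V)/(R)` with `dim V = 3`,
`dim R = 3`, `dim A₂ = 6`, `dim A₃ = 10`, and quasipotential `Q` spanning
`R·V ∩ V·R`, the quasipotential `Q` is a scalar multiple of `u⊗u⊗u` (for `u ≠ 0`
in `V`) iff `u⊗u ∈ R`. -/
theorem stmt2 (K : Type*) [Field K] (V : Type*) [AddCommGroup V] [Module K V]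
    [FiniteDimensional K V] (hV : finrank K V = 3)
    (Vs : Submodule K (TensorAlgebra K V))
    (hVs : Vs = LinearMap.range (TensorAlgebra.ι K : V →ₗ[K] TensorAlgebra K V))
    (R : Submodule K (TensorAlgebra K V)) (hR : R ≤ Vs ^ 2) (hRdim : finrank K R = 3)
    (hA2 : finrank K
      (Submodule.map (⊤ * R * ⊤ : Submodule K (TensorAlgebra K V)).mkQ (Vs ^ 2)) = 6)
    (hA3 : finrank K
      (Submodule.map (⊤ * R * ⊤ : Submodule K (TensorAlgebra K V)).mkQ (Vs ^ 3)) = 10)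
    (Q : TensorAlgebra K V) (hQ : Q ≠ 0)
    (hQspan : (R * Vs) ⊓ (Vs * R) = Submodule.span K {Q})
    (u : V) (hu : u ≠ 0) :
    (∃ c : K, Q = c • (TensorAlgebra.ι K u * TensorAlgebra.ι K u * TensorAlgebra.ι K u)) ↔
      TensorAlgebra.ι K u * TensorAlgebra.ι K u ∈ R := by
  -- choose a dual functional with `f u = 1`
  obtain ⟨φ, hφ⟩ : ∃ φ : Module.Dual K V, φ u ≠ 0 := by
    by_contra h
    push_neg at h
    exact hu ((Module.forall_dual_apply_eq_zero_iff K u).mp h)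
  set f : Module.Dual K V := (φ u)⁻¹ • φ with hf
  have hfu : f u = 1 := by simp [hf, inv_mul_cancel₀ hφ]
  have hι : TensorAlgebra.ι K u ∈ Vs := by
    rw [hVs]; exact LinearMap.mem_range_self _ u
  set cube := TensorAlgebra.ι K u * TensorAlgebra.ι K u * TensorAlgebra.ι K u with hcube
  -- the contraction sends `Vs * R` into `R`
  have hkey : ∀ x ∈ Vs * R, contrHom f x 0 1 ∈ R := by
    intro x hx
    refine Submodule.mul_induction_on (C := fun y => contrHom f y 0 1 ∈ R) hx
      (fun m hm n hn => ?_) (fun a b ha hb => ?_)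
    · rw [hVs] at hm
      obtain ⟨v, rfl⟩ := hm
      rw [contrHom_ι_mul]
      exact R.smul_mem _ hn
    · simp only [map_add, Matrix.add_apply]; exact R.add_mem ha hb
  -- contraction of the cube
  have hΦcube : contrHom f cube 0 1 =
      TensorAlgebra.ι K u * TensorAlgebra.ι K u := by
    rw [hcube, mul_assoc, contrHom_ι_mul, hfu, one_smul]
  constructor
  · rintro ⟨c, hc⟩
    have hc0 : c ≠ 0 := by rintro rfl; simp at hc; exact hQ hc
    have hQmem : Q ∈ (R * Vs) ⊓ (Vs * R) := by
      rw [hQspan]; exact Submodule.mem_span_singleton_self Q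
    have hcubemem : cube ∈ Vs * R := by
      have : cube = c⁻¹ • Q := by rw [hc, smul_smul, inv_mul_cancel₀ hc0, one_smul]
      rw [this]
      exact Submodule.smul_mem _ _ hQmem.2
    have := hkey cube hcubemem
    rwa [hΦcube] at this
  · intro h
    have h1 : cube ∈ R * Vs := Submodule.mul_mem_mul h hι
    have h2 : cube ∈ Vs * R := by
      rw [hcube, mul_assoc]; exact Submodule.mul_mem_mul hι h
    have hmem : cube ∈ Submodule.span K {Q} := by
      rw [← hQspan]; exact ⟨h1, h2⟩
    obtain ⟨a, ha⟩ := Submodule.mem_span_singleton.mp hmem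
    have hcube0 : cube ≠ 0 := by
      intro h0
      have := congrArg (TensorAlgebra.lift K (f : V →ₗ[K] K)) h0
      rw [hcube] at this
      simp [TensorAlgebra.lift_ι_apply, hfu] at this
    have ha0 : a ≠ 0 := by rintro rfl; rw [zero_smul] at ha; exact hcube0 ha.symm
    exact ⟨a⁻¹, by rw [← ha, smul_smul, inv_mul_cancel₀ ha0, one_smul]⟩
end

section
/- Let K be a field and A = T(V)/(R) a quadratic algebra with V finite-dimensional. Suppose there exist nonzero u, v ∈ V with both u⊗v ∈ R and v⊗u ∈ R. Then the quadratic dual algebra A^! = T(V*)/(R^⊥) is infinite-dimensional, where R^⊥ = {φ ∈ V*⊗V* : φ(r) = 0 for all r ∈ R}. -/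
/-!
Represent `A^!` in `2 × 2` matrices over `K[X]`: send `φ ∈ V*` to `φ u • a + φ v • b` with
`a = E₀₁` and `b = X • E₁₀`. Since `a² = b² = 0`, the image of `φ ⊗ ψ` is
`(φ ⊗ ψ)(u ⊗ v) • ab + (φ ⊗ ψ)(v ⊗ u) • ba`, which vanishes on `R^⊥` because `u ⊗ v, v ⊗ u ∈ R`;
so the representation factors through `A^!`. Choosing `φ u = ψ v = 1`, the element `φ ψ` maps to
`diag(X, φ v ψ u • X)`, whose powers have `(0,0)`-entries `Xⁿ`, hence are linearly independent.
-/

open Module TensorProduct Polynomial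

theorem Submodule.top_mul_mul_top_le_ker_of_le_ker {K A B : Type*} [CommSemiring K] [Semiring A]
    [Algebra K A] [Semiring B] [Algebra K B] (F : A →ₐ[K] B) {S : Submodule K A}
    (hS : S ≤ LinearMap.ker F.toLinearMap) :
    ⊤ * S * ⊤ ≤ LinearMap.ker F.toLinearMap := by
  have hleft : ⊤ * S ≤ LinearMap.ker F.toLinearMap :=
    Submodule.mul_le.mpr fun x _ s hs => by
      have hs := hS hs
      rw [LinearMap.mem_ker] at hs ⊢
      simp_all
  exact Submodule.mul_le.mpr fun x hx y _ => by
    have hx := hleft hx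
    rw [LinearMap.mem_ker] at hx ⊢
    simp_all

theorem not_finiteDimensional_quotient_of_linearIndependent_pow {K A B : Type*} [Field K] [Ring A]
    [Algebra K A] [Ring B] [Algebra K B] {J : Submodule K A}
    (F : A →ₐ[K] B) (hJ : J ≤ LinearMap.ker F.toLinearMap) (w : A)
    (hw : LinearIndependent K fun n : ℕ => F w ^ n) :
    ¬ FiniteDimensional K (A ⧸ J) := by
  intro _
  refine Module.Finite.not_linearIndependent_of_infinite (R := K) (fun n : ℕ => J.mkQ (w ^ n)) <|
    LinearIndependent.of_comp (J.liftQ F.toLinearMap hJ) ?_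
  have hcomp : (J.liftQ F.toLinearMap hJ ∘ fun n : ℕ => J.mkQ (w ^ n)) = fun n => F w ^ n :=
    funext fun n => by simp
  rwa [hcomp]

theorem Matrix.linearIndependent_diagonal_pow {K n : Type*} [CommRing K] [Fintype n] [DecidableEq n]
    (d : n → K[X]) (i : n) (hi : d i = X) :
    LinearIndependent K fun k : ℕ => Matrix.diagonal d ^ k := by
  refine LinearIndependent.of_comp (Matrix.entryLinearMap K K[X] i i) ?_
  convert (basisMonomials K).linearIndependent using 1
  ext k : 1
  simp [Matrix.diagonal_pow, hi, X_pow_eq_monomial]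

section QuadraticDual

variable {K W V B : Type*} [CommSemiring K] [AddCommMonoid W] [Module K W]
  [AddCommMonoid V] [Module K V] [Semiring B] [Algebra K B]

variable (K W) in
def TensorAlgebra.mulι : W ⊗[K] W →ₗ[K] TensorAlgebra K W :=
  TensorProduct.lift ((LinearMap.mul K (TensorAlgebra K W)).compl₁₂
    (TensorAlgebra.ι K) (TensorAlgebra.ι K))

@[simp]
theorem TensorAlgebra.mulι_tmul (x y : W) :
    TensorAlgebra.mulι K W (x ⊗ₜ y) = TensorAlgebra.ι K x * TensorAlgebra.ι K y := rfl

def Module.Dual.evalPair (u v : V) (a b : B) : Dual K V →ₗ[K] B :=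
  (Dual.eval K V u).smulRight a + (Dual.eval K V v).smulRight b

theorem Module.Dual.evalPair_apply (u v : V) (a b : B) (φ : Dual K V) :
    evalPair u v a b φ = φ u • a + φ v • b := rfl

theorem TensorAlgebra.lift_evalPair_mulι {u v : V} {a b : B} (ha : a * a = 0) (hb : b * b = 0)
    (ω : Dual K V ⊗[K] Dual K V) :
    TensorAlgebra.lift K (Dual.evalPair u v a b) (TensorAlgebra.mulι K _ ω) =
      dualDistrib K V V ω (u ⊗ₜ v) • (a * b) + dualDistrib K V V ω (v ⊗ₜ u) • (b * a) := by
  induction ω using TensorProduct.induction_on with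
  | zero => simp
  | tmul φ ψ =>
    simp only [TensorAlgebra.mulι_tmul, map_mul, TensorAlgebra.lift_ι_apply,
      Dual.evalPair_apply, dualDistrib_apply, add_mul, mul_add, smul_mul_smul_comm, ha, hb,
      smul_zero, zero_add, add_comm]
  | add x y hx hy =>
    simp only [map_add, hx, hy, LinearMap.add_apply, add_smul]
    abel

theorem TensorAlgebra.map_mulι_dualAnnihilator_le_ker {R : Submodule K (V ⊗[K] V)} {u v : V}
    (huv : u ⊗ₜ[K] v ∈ R) (hvu : v ⊗ₜ[K] u ∈ R) {a b : B} (ha : a * a = 0) (hb : b * b = 0) :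
    (R.dualAnnihilator.comap (dualDistrib K V V)).map (TensorAlgebra.mulι K _) ≤
      LinearMap.ker (TensorAlgebra.lift K (Dual.evalPair u v a b)).toLinearMap := by
  rintro _ ⟨ω, hω, rfl⟩
  have hω : ∀ r ∈ R, dualDistrib K V V ω r = 0 := (Submodule.mem_dualAnnihilator _).mp hω
  simp [TensorAlgebra.lift_evalPair_mulι ha hb, hω _ huv, hω _ hvu]

end QuadraticDual

theorem stmt3_general (K : Type*) [Field K] (V : Type*) [AddCommGroup V] [Module K V]
    (R : Submodule K (V ⊗[K] V))
    (u v : V) (hu : u ≠ 0) (hv : v ≠ 0)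
    (huv : u ⊗ₜ[K] v ∈ R) (hvu : v ⊗ₜ[K] u ∈ R) :
    ¬ FiniteDimensional K
      (TensorAlgebra K (Module.Dual K V) ⧸
        (⊤ * (Submodule.map
            (TensorProduct.lift
              ((LinearMap.mul K (TensorAlgebra K (Module.Dual K V))).compl₁₂
                (TensorAlgebra.ι K) (TensorAlgebra.ι K)))
            (Submodule.comap (TensorProduct.dualDistrib K V V)
              (Submodule.dualAnnihilator R))) * ⊤ :
          Submodule K (TensorAlgebra K (Module.Dual K V)))) := by
  obtain ⟨φ, hφ⟩ := Projective.exists_dual_eq_one K hu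
  obtain ⟨ψ, hψ⟩ := Projective.exists_dual_eq_one K hv
  let a : Matrix (Fin 2) (Fin 2) K[X] := Matrix.single 0 1 1
  let b : Matrix (Fin 2) (Fin 2) K[X] := Matrix.single 1 0 X
  have ha : a * a = 0 := Matrix.single_mul_single_of_ne _ _ _ _ (by decide) _
  have hb : b * b = 0 := Matrix.single_mul_single_of_ne _ _ _ _ (by decide) _
  refine not_finiteDimensional_quotient_of_linearIndependent_pow _
    (Submodule.top_mul_mul_top_le_ker_of_le_ker _
      (TensorAlgebra.map_mulι_dualAnnihilator_le_ker huv hvu ha hb))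
    (TensorAlgebra.mulι K _ (φ ⊗ₜ ψ)) ?_
  have hw : TensorAlgebra.lift K (Dual.evalPair u v a b) (TensorAlgebra.mulι K _ (φ ⊗ₜ ψ)) =
      Matrix.diagonal ![X, (φ v * ψ u) • X] := by
    rw [TensorAlgebra.lift_evalPair_mulι ha hb, dualDistrib_apply, dualDistrib_apply, hφ, hψ,
      Matrix.single_mul_single_same, Matrix.single_mul_single_same,
      ← Matrix.sum_single_eq_diagonal, Fin.sum_univ_two, Matrix.smul_single]
    simp
  rw [hw]
  exact Matrix.linearIndependent_diagonal_pow _ 0 rfl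

/-- If a quadratic algebra `A = T(V)/(R)` has `u⊗v, v⊗u ∈ R` for
nonzero `u, v ∈ V`, then the quadratic dual `A^! = T(V*)/(R^⊥)` is
infinite-dimensional.  Here `R^⊥ ⊆ V*⊗V*` is the annihilator of `R` under the
canonical pairing, transported into the degree-2 component of `T(V*)` by the
multiplication map `φ ⊗ ψ ↦ ι φ * ι ψ`, and `A^!` is the quotient of `T(V*)` by
the two-sided ideal it generates. -/
theorem stmt3 (K : Type*) [Field K] (V : Type*) [AddCommGroup V] [Module K V]
    [FiniteDimensional K V]
    (R : Submodule K (V ⊗[K] V))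
    (u v : V) (hu : u ≠ 0) (hv : v ≠ 0)
    (huv : u ⊗ₜ[K] v ∈ R) (hvu : v ⊗ₜ[K] u ∈ R) :
    ¬ FiniteDimensional K
      (TensorAlgebra K (Module.Dual K V) ⧸
        (⊤ * (Submodule.map
            (TensorProduct.lift
              ((LinearMap.mul K (TensorAlgebra K (Module.Dual K V))).compl₁₂
                (TensorAlgebra.ι K) (TensorAlgebra.ι K)))
            (Submodule.comap (TensorProduct.dualDistrib K V V)
              (Submodule.dualAnnihilator R))) * ⊤ :
          Submodule K (TensorAlgebra K (Module.Dual K V)))) :=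
  stmt3_general K V R u v hu hv huv hvu
end

section
/- Let K be an algebraically closed field and V a 2-dimensional K-vector space. For every 2-dimensional subspace S of V⊗V there exists a basis x, y of V such that S equals the span of one of the following pairs: {xx, yy}; {xx − yx, yy}; {xy, yy}; {yx, yy}; {xy − α yx, yy} with α ∈ Kˣ; {xy, yx}; {xx − xy, yx}; {xx − a·xy − yy, yx} with a ∈ K and a² + 1 ≠ 0 (here uv abbreviates u⊗v). -/
/-!
The determinant of coordinate matrices is a binary quadratic form on `S`, so over an
algebraically closed field `S` contains a nonzero rank-one tensor `u ⊗ w`.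

If `S` contains a nonzero square `y ⊗ y`, complete `y` to a basis `x, y`; then
`S = ⟨y ⊗ y, a xx + b xy + c yx⟩` and the first five normal forms arise according to which of
`a, b, c` vanish and whether `b = c`. Otherwise `u, w` are independent, and with `y = u`, `x = w`
we get `S = ⟨y ⊗ x, a xx + b xy + d yy⟩`, where the absence of squares forces `b² ≠ ad`
(if `a ≠ 0`, then `(a x + b y) ⊗ (a x + b y) ∈ S` when `b² = ad`). This leaves the last three
forms, the generic one after taking a square root of `-ad`.
-/

open Module TensorProduct

namespace Submodule

variable {K M : Type*} [Field K] [AddCommGroup M] [Module K M]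

theorem span_pair_eq_span_pair {A B G₁ G₂ : M} (c₁ c₂ c₃ c₄ : K)
    (h₁ : G₁ = c₁ • A + c₂ • B) (h₂ : G₂ = c₃ • A + c₄ • B)
    (hdet : c₁ * c₄ ≠ c₂ * c₃) :
    span K {A, B} = span K {G₁, G₂} := by
  have hD : c₁ * c₄ - c₂ * c₃ ≠ 0 := sub_ne_zero.2 hdet
  refine le_antisymm (span_le.2 ?_) (span_le.2 ?_)
  · rintro _ (rfl | rfl) <;> rw [SetLike.mem_coe, ← smul_mem_iff _ hD, mem_span_pair]
    · exact ⟨c₄, -c₂, by rw [h₁, h₂]; module⟩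
    · exact ⟨-c₃, c₁, by rw [h₁, h₂]; module⟩
  · rintro _ (rfl | rfl)
    · exact mem_span_pair.2 ⟨c₁, c₂, h₁.symm⟩
    · exact mem_span_pair.2 ⟨c₃, c₄, h₂.symm⟩

theorem exists_linearIndependent_eq_span_pair {S : Submodule K M} (hS : finrank K S = 2)
    {v : M} (hv : v ∈ S) (hv₀ : v ≠ 0) :
    ∃ w, LinearIndependent K ![v, w] ∧ S = span K {v, w} := by
  obtain ⟨w, hw⟩ := exists_linearIndependent_pair_of_one_lt_finrank (hS ▸ one_lt_two)
    (x := (⟨v, hv⟩ : S)) (by simpa using hv₀)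
  have hvw : LinearIndependent K ![v, (w : M)] := by
    have h := hw.map' S.subtype S.ker_subtype
    rwa [show S.subtype ∘ ![⟨v, hv⟩, w] = ![v, (w : M)] by ext i; fin_cases i <;> rfl] at h
  have : FiniteDimensional K S := Module.finite_of_finrank_eq_succ hS
  refine ⟨w, hvw, (eq_of_le_of_finrank_eq (span_le.2 ?_) ?_).symm⟩
  · rintro _ (rfl | rfl)
    exacts [hv, w.2]
  · rw [hS, ← Matrix.range_cons_cons_empty, finrank_span_eq_card hvw, Fintype.card_fin]

end Submodule

theorem IsAlgClosed.exists_quadratic_eq_zero {K : Type*} [Field K] [IsAlgClosed K] {a : K}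
    (ha : a ≠ 0) (b c : K) : ∃ s, a * s ^ 2 + b * s + c = 0 := by
  open Polynomial in
  obtain ⟨s, hs⟩ := IsAlgClosed.exists_root (C a * X ^ 2 + C b * X + C c)
    (by rw [degree_quadratic ha]; decide)
  exact ⟨s, by simpa using hs⟩

namespace TensorProduct

variable {K V : Type*} [Field K] [AddCommGroup V] [Module K V]

theorem exists_eq_tmul_of_mul_eq_mul (x y : V) {a b c d : K} (h : a * d = b * c) :
    ∃ u w : V,
      a • x ⊗ₜ[K] x + b • x ⊗ₜ y + c • y ⊗ₜ x + d • y ⊗ₜ y = u ⊗ₜ w := by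
  rcases eq_or_ne a 0 with rfl | ha
  · obtain rfl | rfl := mul_eq_zero.1 (h.symm.trans (zero_mul d))
    · refine ⟨y, c • x + d • y, ?_⟩
      simp only [tmul_add, tmul_smul]; module
    · refine ⟨b • x + d • y, y, ?_⟩
      simp only [add_tmul, ← smul_tmul']; module
  · refine ⟨a • x + c • y, x + (b / a) • y, ?_⟩
    simp only [add_tmul, tmul_add, ← smul_tmul', tmul_smul]
    match_scalars <;> field_simp
    linear_combination h

theorem exists_eq_coords (hV : finrank K V = 2) {x y : V} (hxy : LinearIndependent K ![x, y])
    (t : V ⊗[K] V) :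
    ∃ a b c d : K,
      t = a • x ⊗ₜ[K] x + b • x ⊗ₜ y + c • y ⊗ₜ x + d • y ⊗ₜ y := by
  have : FiniteDimensional K V := Module.finite_of_finrank_eq_succ hV
  let e := basisOfLinearIndependentOfCardEqFinrank hxy (by simp [hV])
  have he : ∀ i, e i = ![x, y] i := fun i => by simp [e]
  let T := e.tensorProduct e
  refine ⟨T.repr t (0, 0), T.repr t (0, 1), T.repr t (1, 0), T.repr t (1, 1), ?_⟩
  conv_lhs => rw [← T.sum_repr t, Fintype.sum_prod_type]
  simp only [Fin.sum_univ_two, T, Basis.tensorProduct_apply, he, Matrix.cons_val_zero,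
    Matrix.cons_val_one, add_assoc]

end TensorProduct

open Submodule

section NormalForm

variable {K V : Type*} [Field K] [AddCommGroup V] [Module K V]

def IsNormalForm (x y : V) (S : Submodule K (V ⊗[K] V)) : Prop :=
  S = span K {x ⊗ₜ[K] x, y ⊗ₜ[K] y} ∨
  S = span K {x ⊗ₜ[K] x - y ⊗ₜ[K] x, y ⊗ₜ[K] y} ∨
  S = span K {x ⊗ₜ[K] y, y ⊗ₜ[K] y} ∨
  S = span K {y ⊗ₜ[K] x, y ⊗ₜ[K] y} ∨
  (∃ α : K, α ≠ 0 ∧ S = span K {x ⊗ₜ[K] y - α • (y ⊗ₜ[K] x), y ⊗ₜ[K] y}) ∨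
  S = span K {x ⊗ₜ[K] y, y ⊗ₜ[K] x} ∨
  S = span K {x ⊗ₜ[K] x - x ⊗ₜ[K] y, y ⊗ₜ[K] x} ∨
  ∃ a : K, a ^ 2 + 1 ≠ 0 ∧
    S = span K {x ⊗ₜ[K] x - a • (x ⊗ₜ[K] y) - y ⊗ₜ[K] y, y ⊗ₜ[K] x}

variable {S : Submodule K (V ⊗[K] V)} {x y : V}

theorem exists_isNormalForm_of_eq_span_tmul_self (hxy : LinearIndependent K ![x, y])
    {a b c d : K} (habc : a ≠ 0 ∨ b ≠ 0 ∨ c ≠ 0)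
    (hS : S = span K
      {y ⊗ₜ y, a • x ⊗ₜ x + b • x ⊗ₜ y + c • y ⊗ₜ x + d • y ⊗ₜ y}) :
    ∃ X Y : V, LinearIndependent K ![X, Y] ∧ IsNormalForm X Y S := by
  rw [hS]
  rcases eq_or_ne a 0 with rfl | ha
  · rcases eq_or_ne b 0 with rfl | hb
    · have hc : c ≠ 0 := by simpa using habc
      refine ⟨x, y, hxy, .inr <| .inr <| .inr <| .inl ?_⟩
      exact (span_pair_eq_span_pair 0 1 c d (by module) (by module)
        (by simpa using hc.symm)).symm
    rcases eq_or_ne c 0 with rfl | hc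
    · refine ⟨x, y, hxy, .inr <| .inr <| .inl ?_⟩
      exact (span_pair_eq_span_pair 0 1 b d (by module) (by module)
        (by simpa using hb.symm)).symm
    · refine ⟨x, y, hxy, .inr <| .inr <| .inr <| .inr <| .inl
        ⟨-c / b, div_ne_zero (neg_ne_zero.2 hc) hb, ?_⟩⟩
      refine (span_pair_eq_span_pair 0 1 b d (by module) ?_ (by simpa using hb.symm)).symm
      rw [smul_sub, smul_smul, mul_div_cancel₀ _ hb]
      module
  rcases eq_or_ne b c with rfl | hbc
  · refine ⟨a • x + b • y, y, by
        simpa using (LinearIndependent.pair_add_smul_add_smul_iff a b 0 1).2 ⟨hxy, by simpa⟩,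
      .inl ?_⟩
    refine span_pair_eq_span_pair (b * b - a * d) a 1 0 ?_ (by module) (by simpa using ha.symm)
    simp only [add_tmul, tmul_add, ← smul_tmul', tmul_smul]
    module
  · refine ⟨a • x + b • y, (b - c) • y, by
        simpa using (LinearIndependent.pair_add_smul_add_smul_iff a b 0 (b - c)).2
          ⟨hxy, by simpa [ha, sub_eq_zero] using hbc⟩,
      .inr <| .inl ?_⟩
    refine span_pair_eq_span_pair (b * c - a * d) a ((b - c) ^ 2) 0 ?_ ?_ ?_
    · simp only [add_tmul, tmul_add, ← smul_tmul', tmul_smul]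
      module
    · simp only [← smul_tmul', tmul_smul]
      module
    · simpa [ha, sub_eq_zero] using hbc

theorem exists_isNormalForm_of_eq_span_tmul [IsAlgClosed K] (hxy : LinearIndependent K ![x, y])
    {a b c d : K} (hbd : b * b ≠ a * d)
    (hS : S = span K
      {y ⊗ₜ x, a • x ⊗ₜ x + b • x ⊗ₜ y + c • y ⊗ₜ x + d • y ⊗ₜ y}) :
    ∃ X Y : V, LinearIndependent K ![X, Y] ∧ IsNormalForm X Y S := by
  rw [hS]
  rcases eq_or_ne a 0 with rfl | ha
  · have hb : b ≠ 0 := by rintro rfl; simp at hbd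
    rcases eq_or_ne d 0 with rfl | hd
    · refine ⟨x, y, hxy, .inr <| .inr <| .inr <| .inr <| .inr <| .inl ?_⟩
      exact (span_pair_eq_span_pair 0 1 b c (by module) (by module)
        (by simpa using hb.symm)).symm
    · refine ⟨d • y, b • x + d • y, by
        simpa using (LinearIndependent.pair_add_smul_add_smul_iff 0 d b d).2
          ⟨hxy, by simp [hb, hd]⟩,
        .inr <| .inr <| .inr <| .inr <| .inr <| .inr <| .inl ?_⟩
      refine span_pair_eq_span_pair (-(d * b)) 0 (-(d * c)) d ?_ ?_ (by simp [hb, hd])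
      · simp only [tmul_add, ← smul_tmul', tmul_smul]
        module
      · simp only [add_tmul, ← smul_tmul', tmul_smul]
        module
  rcases eq_or_ne d 0 with rfl | hd
  · have hb : b ≠ 0 := by rintro rfl; simp at hbd
    refine ⟨a • x, (-b) • y, by
      simpa using (LinearIndependent.pair_add_smul_add_smul_iff a 0 0 (-b)).2
        ⟨hxy, by simp [ha, hb]⟩,
      .inr <| .inr <| .inr <| .inr <| .inr <| .inr <| .inl ?_⟩
    refine span_pair_eq_span_pair (-(a * c)) a (-(a * b)) 0 ?_ ?_ (by simp [ha, hb])
    · simp only [← smul_tmul', tmul_smul]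
      module
    · simp only [← smul_tmul', tmul_smul]
      module
  -- `(b x + d y) ⊗ (a x + b y) ≡ b B` modulo `y ⊗ x`, and `μ ^ 2 = -ad` makes
  -- `X ⊗ X - (b / μ) X ⊗ Y - Y ⊗ Y ≡ a d² B` as well.
  obtain ⟨μ, hμ⟩ := IsAlgClosed.exists_pow_nat_eq (-(a * d)) two_pos
  have hμ₀ : μ ≠ 0 := by rintro rfl; simp_all
  refine ⟨(d * a) • x + (d * b) • y, μ • (b • x + d • y), ?_,
    .inr <| .inr <| .inr <| .inr <| .inr <| .inr <| .inr ⟨b / μ, ?_, ?_⟩⟩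
  · have hdet : d * a * (μ * d) ≠ d * b * (μ * b) := by
      intro h; apply hbd; apply mul_left_cancel₀ (mul_ne_zero hμ₀ hd); linear_combination -h
    simpa [smul_add, smul_smul] using
      (LinearIndependent.pair_add_smul_add_smul_iff _ _ _ _).2 ⟨hxy, hdet⟩
  · intro h; apply hbd
    field_simp at h
    linear_combination h - hμ
  · refine span_pair_eq_span_pair (2 * a * b * d ^ 2 - b ^ 3 * d - a * c * d ^ 2) (a * d ^ 2)
      (μ * d * (a * d - b * c)) (μ * d * b) ?_ ?_ ?_
    · simp only [add_tmul, tmul_add, ← smul_tmul', tmul_smul]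
      match_scalars <;> field_simp <;> rw [hμ] <;> ring
    · simp only [add_tmul, tmul_add, ← smul_tmul', tmul_smul]
      module
    · intro h; apply hbd
      have : μ * d ^ 2 * (b * b - a * d) ^ 2 = 0 := by linear_combination -h
      simpa [hμ₀, hd, sub_eq_zero] using this

end NormalForm

section Classification

variable {K V : Type*} [Field K] [AddCommGroup V] [Module K V] {S : Submodule K (V ⊗[K] V)}

theorem exists_tmul_mem_ne_zero [IsAlgClosed K] (hV : finrank K V = 2) (hS : finrank K S = 2) :
    ∃ u w : V, u ⊗ₜ[K] w ∈ S ∧ u ⊗ₜ[K] w ≠ 0 := by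
  obtain ⟨A, hA, hA₀⟩ := exists_mem_ne_zero_of_ne_bot (p := S) (by rintro rfl; simp at hS)
  obtain ⟨B, hAB, hSAB⟩ := exists_linearIndependent_eq_span_pair hS hA hA₀
  have hB : B ∈ S := hSAB ▸ subset_span (by simp)
  have : FiniteDimensional K V := Module.finite_of_finrank_eq_succ hV
  let e := Module.finBasisOfFinrankEq K V hV
  have hxy : LinearIndependent K ![e 0, e 1] := by
    convert e.linearIndependent; ext i; fin_cases i <;> rfl
  obtain ⟨a, b, c, d, rfl⟩ := exists_eq_coords hV hxy A
  obtain ⟨a', b', c', d', rfl⟩ := exists_eq_coords hV hxy B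
  obtain ⟨t, htS, ht₀, p, q, r, s, hpqrs, rfl⟩ : ∃ t ∈ S, t ≠ 0 ∧ ∃ p q r s : K, p * s = q * r ∧
      t = p • e 0 ⊗ₜ e 0 + q • e 0 ⊗ₜ e 1 + r • e 1 ⊗ₜ e 0 + s • e 1 ⊗ₜ e 1 := by
    by_cases hdet : a * d = b * c
    · exact ⟨_, hA, hA₀, a, b, c, d, hdet, rfl⟩
    -- the determinant of `s • A + B` is a quadratic in `s` with leading coefficient `det A ≠ 0`
    obtain ⟨s, hs⟩ := IsAlgClosed.exists_quadratic_eq_zero (sub_ne_zero.2 hdet)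
      (a * d' + a' * d - b * c' - b' * c) (a' * d' - b' * c')
    refine ⟨_, add_mem (smul_mem _ s hA) hB,
      fun h => one_ne_zero (LinearIndependent.pair_iff.1 hAB s 1 (by rwa [one_smul])).2,
      s * a + a', s * b + b', s * c + c', s * d + d', by linear_combination hs, by module⟩
  obtain ⟨u, w, huw⟩ := exists_eq_tmul_of_mul_eq_mul (e 0) (e 1) hpqrs
  exact ⟨u, w, huw ▸ htS, huw ▸ ht₀⟩

theorem exists_isNormalForm_of_tmul_self_mem (hV : finrank K V = 2) (hS : finrank K S = 2)
    {y : V} (hyS : y ⊗ₜ[K] y ∈ S) (hy : y ⊗ₜ[K] y ≠ 0) :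
    ∃ X Y : V, LinearIndependent K ![X, Y] ∧ IsNormalForm X Y S := by
  obtain ⟨x, hyx⟩ := exists_linearIndependent_pair_of_one_lt_finrank (hV ▸ one_lt_two)
    (x := y) (by rintro rfl; simp at hy)
  have hxy := LinearIndependent.pair_symm_iff.1 hyx
  obtain ⟨B, hB, hSB⟩ := exists_linearIndependent_eq_span_pair hS hyS hy
  obtain ⟨a, b, c, d, rfl⟩ := exists_eq_coords hV hxy B
  refine exists_isNormalForm_of_eq_span_tmul_self hxy ?_ hSB
  by_contra! habc
  obtain ⟨rfl, rfl, rfl⟩ := habc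
  exact (LinearIndependent.pair_iff' hy).1 hB d (by module)

theorem mul_self_ne_of_forall_tmul_self_mem {x y : V} {B : V ⊗[K] V}
    (hB : LinearIndependent K ![y ⊗ₜ[K] x, B]) (hS : S = span K {y ⊗ₜ x, B})
    (hsq : ∀ v : V, v ⊗ₜ[K] v ∈ S → v ⊗ₜ[K] v = 0) {a b c d : K}
    (hBc : B = a • x ⊗ₜ x + b • x ⊗ₜ y + c • y ⊗ₜ x + d • y ⊗ₜ y) :
    b * b ≠ a * d := by
  have hsq' (v : V) (p q : K) (hv : v ⊗ₜ[K] v = p • y ⊗ₜ x + q • B) : q = 0 :=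
    have hvS : v ⊗ₜ[K] v ∈ S := hS ▸ mem_span_pair.2 ⟨p, q, hv.symm⟩
    (LinearIndependent.pair_iff.1 hB p q (hv ▸ hsq v hvS)).2
  intro hbd
  rcases eq_or_ne a 0 with rfl | ha
  · obtain rfl : b = 0 := by simpa using hbd
    obtain rfl : d = 0 := hsq' (d • y) (-(d * c)) d (by
      rw [hBc, ← smul_tmul', tmul_smul]; module)
    have := (LinearIndependent.pair_iff.1 hB c (-1) (by rw [hBc]; module)).2
    exact one_ne_zero (neg_eq_zero.1 this)
  · exact ha (hsq' (a • x + b • y) (a * b - a * c) a (by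
      simp only [hBc, add_tmul, tmul_add, ← smul_tmul', tmul_smul]
      linear_combination (norm := module) hbd • y ⊗ₜ[K] y))

theorem exists_isNormalForm_of_forall_tmul_self_mem [IsAlgClosed K] (hV : finrank K V = 2)
    (hS : finrank K S = 2) (hsq : ∀ v : V, v ⊗ₜ[K] v ∈ S → v ⊗ₜ[K] v = 0) :
    ∃ X Y : V, LinearIndependent K ![X, Y] ∧ IsNormalForm X Y S := by
  obtain ⟨y, x, hyxS, hyx⟩ := exists_tmul_mem_ne_zero hV hS
  have hxy : LinearIndependent K ![x, y] := by
    refine (LinearIndependent.pair_iff' (by rintro rfl; simp at hyx)).2 fun k hk => ?_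
    subst hk
    have hxx : k • x ⊗ₜ[K] x ∈ S := by rwa [smul_tmul']
    have hk : k ≠ 0 := by rintro rfl; simp at hyx
    exact hyx (by rw [← smul_tmul', hsq x ((smul_mem_iff _ hk).1 hxx), smul_zero])
  obtain ⟨B, hB, hSB⟩ := exists_linearIndependent_eq_span_pair hS hyxS hyx
  obtain ⟨a, b, c, d, hBc⟩ := exists_eq_coords hV hxy B
  exact exists_isNormalForm_of_eq_span_tmul hxy
    (mul_self_ne_of_forall_tmul_self_mem hB hSB hsq hBc) (hBc ▸ hSB)

end Classification

theorem stmt6_general (K : Type*) [Field K] [IsAlgClosed K] (V : Type*) [AddCommGroup V]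
    [Module K V] (hV : finrank K V = 2)
    (S : Submodule K (V ⊗[K] V)) (hS : finrank K S = 2) :
    ∃ x y : V, LinearIndependent K ![x, y] ∧
      (S = Submodule.span K {x ⊗ₜ[K] x, y ⊗ₜ[K] y} ∨
       S = Submodule.span K {x ⊗ₜ[K] x - y ⊗ₜ[K] x, y ⊗ₜ[K] y} ∨
       S = Submodule.span K {x ⊗ₜ[K] y, y ⊗ₜ[K] y} ∨
       S = Submodule.span K {y ⊗ₜ[K] x, y ⊗ₜ[K] y} ∨
       (∃ α : K, α ≠ 0 ∧
         S = Submodule.span K {x ⊗ₜ[K] y - α • (y ⊗ₜ[K] x), y ⊗ₜ[K] y}) ∨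
       S = Submodule.span K {x ⊗ₜ[K] y, y ⊗ₜ[K] x} ∨
       S = Submodule.span K {x ⊗ₜ[K] x - x ⊗ₜ[K] y, y ⊗ₜ[K] x} ∨
       (∃ a : K, a ^ 2 + 1 ≠ 0 ∧
         S = Submodule.span K {x ⊗ₜ[K] x - a • (x ⊗ₜ[K] y) - y ⊗ₜ[K] y, y ⊗ₜ[K] x})) := by
  by_cases h : ∃ v : V, v ⊗ₜ[K] v ∈ S ∧ v ⊗ₜ[K] v ≠ 0
  · obtain ⟨v, hvS, hv⟩ := h
    exact exists_isNormalForm_of_tmul_self_mem hV hS hvS hv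
  · push Not at h
    exact exists_isNormalForm_of_forall_tmul_self_mem hV hS h

/-- Canonical forms of 2-dimensional subspaces of `V ⊗ V` for
`dim V = 2` over an algebraically closed field. -/
theorem stmt6 (K : Type*) [Field K] [IsAlgClosed K] (V : Type*) [AddCommGroup V]
    [Module K V] [FiniteDimensional K V] (hV : finrank K V = 2)
    (S : Submodule K (V ⊗[K] V)) (hS : finrank K S = 2) :
    ∃ x y : V, LinearIndependent K ![x, y] ∧
      (S = Submodule.span K {x ⊗ₜ[K] x, y ⊗ₜ[K] y} ∨
       S = Submodule.span K {x ⊗ₜ[K] x - y ⊗ₜ[K] x, y ⊗ₜ[K] y} ∨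
       S = Submodule.span K {x ⊗ₜ[K] y, y ⊗ₜ[K] y} ∨
       S = Submodule.span K {y ⊗ₜ[K] x, y ⊗ₜ[K] y} ∨
       (∃ α : K, α ≠ 0 ∧
         S = Submodule.span K {x ⊗ₜ[K] y - α • (y ⊗ₜ[K] x), y ⊗ₜ[K] y}) ∨
       S = Submodule.span K {x ⊗ₜ[K] y, y ⊗ₜ[K] x} ∨
       S = Submodule.span K {x ⊗ₜ[K] x - x ⊗ₜ[K] y, y ⊗ₜ[K] x} ∨
       (∃ a : K, a ^ 2 + 1 ≠ 0 ∧
         S = Submodule.span K {x ⊗ₜ[K] x - a • (x ⊗ₜ[K] y) - y ⊗ₜ[K] y, y ⊗ₜ[K] x})) :=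
  stmt6_general K V hV S hS
end
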